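/- Let q = p^t, P ∈ 𝔽_q[T] a monic irreducible polynomial of degree d, and β ≥ 2. The number of subgroups of order p of (𝔽_q[T]/(P^β))^× equals (q^{(β − ⌈β/p⌉)d} − 1)/(p − 1). -/

import Mathlib

open Polynomial

/-! In characteristic `p`, `u ↦ u - 1` is a bijection from the units with `u ^ p = 1` onto the
elements with `y ^ p = 0`, because `(1 + y) ^ p = 1 + y ^ p`. In `𝔽_q[T]/(P^β)` the class of `f`
has `p`-th power zero iff `P ^ β ∣ f ^ p` iff `P ^ c ∣ f` with `c = ⌈β/p⌉`, so these elements form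
the image of multiplication by `P ^ c`, which is isomorphic to `𝔽_q[T]/(P^(β - c))` and has
`q ^ ((β - c) d)` elements. Every subgroup of order `p` contains exactly `p - 1` elements of order
`p`, and these exhaust the solutions of `u ^ p = 1` other than `1`. -/

section SubgroupsOfPrimeOrder

variable {G : Type*} [Group G] {p : ℕ}

theorem Subgroup.zpowers_eq_iff_of_natCard_eq_prime (hp : p.Prime) {H : Subgroup G}
    (hH : Nat.card H = p) {x : G} : Subgroup.zpowers x = H ↔ x ∈ H ∧ x ≠ 1 := by
  constructor
  · rintro rfl
    refine ⟨Subgroup.mem_zpowers x, fun hx => hp.ne_one ?_⟩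
    rw [← hH, hx, Subgroup.zpowers_one_eq_bot, Subgroup.card_bot]
  · rintro ⟨hxH, hx1⟩
    have hx : orderOf x = p := by
      have hdvd := hH ▸ H.orderOf_dvd_natCard hxH
      exact ((Nat.dvd_prime hp).1 hdvd).resolve_left (mt orderOf_eq_one_iff.1 hx1)
    have : Finite H := Nat.finite_of_card_ne_zero (hH ▸ hp.ne_zero)
    exact Subgroup.eq_of_le_of_card_ge (Subgroup.zpowers_le.2 hxH)
      (by rw [Nat.card_zpowers, hx, hH])

theorem natCard_orderOf_eq_prime [Finite G] (hp : p.Prime) :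
    Nat.card {x : G // orderOf x = p} =
      Nat.card {H : Subgroup G // Nat.card H = p} * (p - 1) := by
  have : Fintype {H : Subgroup G // Nat.card H = p} := Fintype.ofFinite _
  have hfiber (H : {H : Subgroup G // Nat.card H = p}) :
      Nat.card {x : G // Subgroup.zpowers x = H} = p - 1 := by
    simp_rw [Subgroup.zpowers_eq_iff_of_natCard_eq_prime hp H.2]
    change Nat.card ↥((H.1 : Set G) \ {1}) = p - 1
    rw [Nat.card_coe_set_eq, Set.ncard_sdiff_singleton_of_mem H.1.one_mem, ← Nat.card_coe_set_eq,
      SetLike.coe_sort_coe, H.2]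
  rw [← Nat.card_congr (Equiv.sigmaSubtypeFiberEquivSubtype Subgroup.zpowers
    (q := fun H => Nat.card H = p) (fun x => by rw [Nat.card_zpowers])), Nat.card_sigma]
  simp [hfiber, Nat.card_eq_fintype_card]

theorem natCard_pow_eq_one_of_prime [Finite G] (hp : p.Prime) :
    Nat.card {x : G // x ^ p = 1} = Nat.card {x : G // orderOf x = p} + 1 := by
  classical
  have : Fintype G := Fintype.ofFinite G
  have hsplit (x : G) : x ^ p = 1 ↔ orderOf x = p ∨ x = 1 := by
    rw [← orderOf_dvd_iff_pow_eq_one, Nat.dvd_prime hp, orderOf_eq_one_iff, or_comm]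
  rw [Nat.card_congr (Equiv.subtypeEquivRight hsplit), Nat.card_eq_fintype_card,
    Fintype.card_subtype_or_disjoint _ _ ?_, Fintype.card_subtype_eq, Nat.card_eq_fintype_card]
  rintro s hs₁ hs₂ x hx
  have h := hs₁ x hx
  rw [hs₂ x hx, orderOf_one] at h
  exact hp.ne_one h.symm

theorem natCard_subgroups_eq_prime [Finite G] (hp : p.Prime) :
    Nat.card {H : Subgroup G // Nat.card H = p} =
      (Nat.card {x : G // x ^ p = 1} - 1) / (p - 1) := by
  rw [natCard_pow_eq_one_of_prime hp, natCard_orderOf_eq_prime hp, Nat.add_sub_cancel,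
    Nat.mul_div_cancel _ (Nat.sub_pos_of_lt hp.one_lt)]

end SubgroupsOfPrimeOrder

def Units.powEqOneEquivPowEqZero (R : Type*) [CommRing R] (p : ℕ) [Fact p.Prime] [CharP R p] :
    {u : Rˣ // u ^ p = 1} ≃ {y : R // y ^ p = 0} where
  toFun u := ⟨u.1 - 1, by rw [sub_pow_char, one_pow, ← Units.val_pow_eq_pow_val, u.2,
    Units.val_one, sub_self]⟩
  invFun y :=
    have hy : (1 + y.1) ^ p = 1 := by rw [add_pow_char, one_pow, y.2, add_zero]
    ⟨Units.ofPowEqOne _ p hy (Fact.out : p.Prime).ne_zero, Units.pow_ofPowEqOne _ _⟩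
  left_inv u := by ext; simp
  right_inv y := by ext; simp

theorem Polynomial.natCard_quotient_span_singleton {K : Type*} [Field K] {f : K[X]} (hf : f ≠ 0) :
    Nat.card (K[X] ⧸ Ideal.span {f}) = Nat.card K ^ f.natDegree := by
  have : Module.Finite K (K[X] ⧸ Ideal.span {f}) := (AdjoinRoot.powerBasis hf).finite
  rw [Module.natCard_eq_pow_finrank (K := K), finrank_quotient_span_eq_natDegree]

theorem Prime.pow_dvd_pow_iff_pow_ceil_dvd {α : Type*} [CommMonoidWithZero α] [IsCancelMulZero α]
    [WfDvdMonoid α] {P : α} (hP : Prime P) {n : ℕ} (hn : 0 < n) (β : ℕ) (f : α) :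
    P ^ β ∣ f ^ n ↔ P ^ ((β + n - 1) / n) ∣ f := by
  rcases eq_or_ne f 0 with rfl | hf
  · simp [zero_pow hn.ne']
  have hfin : FiniteMultiplicity P f := FiniteMultiplicity.of_prime_left hP hf
  rw [pow_dvd_iff_le_emultiplicity, pow_dvd_iff_le_emultiplicity, emultiplicity_pow hP,
    hfin.emultiplicity_eq_multiplicity, ← Nat.cast_mul, Nat.cast_le, Nat.cast_le,
    Nat.div_le_iff_le_mul_add_pred hn]
  omega

theorem LinearMap.ker_mkQ_comp_mulLeft {R : Type*} [CommRing R] [IsDomain R] {a b m : R}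
    (ha : a ≠ 0) (hm : m = a * b) :
    LinearMap.ker ((Ideal.span {m}).mkQ ∘ₗ LinearMap.mulLeft R a) = Ideal.span {b} := by
  subst hm
  ext g
  simp only [LinearMap.mem_ker, LinearMap.coe_comp, Function.comp_apply, LinearMap.mulLeft_apply,
    Submodule.mkQ_apply, Submodule.Quotient.mk_eq_zero, Ideal.mem_span_singleton,
    mul_dvd_mul_iff_left ha]

theorem Polynomial.natCard_pow_eq_zero_quotient_span_pow {K : Type*} [Field K] {P : K[X]}
    (hP : Prime P) {n : ℕ} (hn : 0 < n) (β : ℕ) :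
    Nat.card {y : K[X] ⧸ Ideal.span {P ^ β} // y ^ n = 0} =
      Nat.card K ^ ((β - (β + n - 1) / n) * P.natDegree) := by
  set c := (β + n - 1) / n
  have hcβ : c ≤ β := by
    rw [Nat.div_le_iff_le_mul_add_pred hn]
    have := Nat.le_mul_of_pos_left β hn
    omega
  have hsplit : P ^ β = P ^ c * P ^ (β - c) := by rw [← pow_add, Nat.add_sub_cancel' hcβ]
  let ψ := (Ideal.span {P ^ β}).mkQ ∘ₗ LinearMap.mulLeft K[X] (P ^ c)
  have hker : LinearMap.ker ψ = Ideal.span {P ^ (β - c)} :=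
    LinearMap.ker_mkQ_comp_mulLeft (pow_ne_zero _ hP.ne_zero) hsplit
  have hpow_eq_zero (f : K[X]) :
      (Ideal.Quotient.mk (Ideal.span {P ^ β}) f) ^ n = 0 ↔ P ^ c ∣ f := by
    rw [← map_pow, Ideal.Quotient.eq_zero_iff_mem, Ideal.mem_span_singleton,
      hP.pow_dvd_pow_iff_pow_ceil_dvd hn]
  have hrange (y : K[X] ⧸ Ideal.span {P ^ β}) : y ∈ LinearMap.range ψ ↔ y ^ n = 0 := by
    obtain ⟨f, rfl⟩ := Ideal.Quotient.mk_surjective y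
    constructor
    · rintro ⟨g, hg⟩
      rw [← hg]
      exact (hpow_eq_zero (P ^ c * g)).2 (dvd_mul_right _ _)
    · rw [hpow_eq_zero]
      rintro ⟨g, rfl⟩
      exact ⟨g, rfl⟩
  rw [Nat.card_congr (Equiv.subtypeEquivRight fun y => (hrange y).symm),
    ← Nat.card_congr (LinearMap.quotKerEquivRange ψ).toEquiv, hker,
    natCard_quotient_span_singleton (pow_ne_zero _ hP.ne_zero), natDegree_pow]

theorem stmt6_general {p t : ℕ} (hp : p.Prime)
    (Fq : Type*) [Field Fq] [Fintype Fq] (hq : Fintype.card Fq = p ^ t)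
    (P : Polynomial Fq) (hPirr : Irreducible P)
    (β : ℕ) (hβ : 2 ≤ β) :
    Nat.card {H : Subgroup (Polynomial Fq ⧸ Ideal.span {P ^ β})ˣ // Nat.card H = p} =
      (Fintype.card Fq ^ ((β - (β + p - 1) / p) * P.natDegree) - 1) / (p - 1) := by
  have : Fact p.Prime := ⟨hp⟩
  have : CharP Fq p := charP_of_card_eq_prime_pow hq
  have hP : Prime P := hPirr.prime
  have hPβ : P ^ β ≠ 0 := pow_ne_zero β hP.ne_zero
  have : Finite (Fq[X] ⧸ Ideal.span {P ^ β}) := Nat.finite_of_card_ne_zero <| by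
    rw [natCard_quotient_span_singleton hPβ]
    exact pow_ne_zero _ Nat.card_pos.ne'
  have : Nontrivial (Fq[X] ⧸ Ideal.span {P ^ β}) := Ideal.Quotient.nontrivial_iff.2 <| by
    rw [Ne, Ideal.span_singleton_eq_top, isUnit_pow_iff (by omega)]
    exact hP.not_isUnit
  have : CharP (Fq[X] ⧸ Ideal.span {P ^ β}) p := charP_of_injective_algebraMap' Fq p
  rw [natCard_subgroups_eq_prime hp, Nat.card_congr (Units.powEqOneEquivPowEqZero _ p),
    natCard_pow_eq_zero_quotient_span_pow hP hp.pos, Nat.card_eq_fintype_card]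

/-- Let `q = p^t`, `P ∈ 𝔽_q[T]` a monic irreducible polynomial of
degree `d`, and `β ≥ 2`.  The number of subgroups of order `p` of the unit group
`(𝔽_q[T]/(P^β))^×` equals `(q ^ ((β - ⌈β/p⌉) * d) - 1) / (p - 1)`, where
`⌈β/p⌉ = (β + p - 1)/p` is the ceiling of `β/p`. -/
theorem stmt6 {p t : ℕ} (hp : p.Prime) (ht : 0 < t)
    (Fq : Type*) [Field Fq] [Fintype Fq] (hq : Fintype.card Fq = p ^ t)
    (P : Polynomial Fq) (hPmonic : P.Monic) (hPirr : Irreducible P)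
    (β : ℕ) (hβ : 2 ≤ β) :
    Nat.card {H : Subgroup (Polynomial Fq ⧸ Ideal.span {P ^ β})ˣ // Nat.card H = p} =
      (Fintype.card Fq ^ ((β - (β + p - 1) / p) * P.natDegree) - 1) / (p - 1) :=
  stmt6_general hp Fq hq P hPirr β hβ
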